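/- arXiv:2001.09644 — 4 statements merged into one kernel-verified Lean document; each statement's English description precedes it below -/
import Mathlib

section
/- Let G be a graph on n vertices and K_k the complete graph on k vertices. Then the maximum number of vertices of an induced k-colorable subgraph of G equals the maximum size of an independent set in the Cartesian product graph K_k □ G; that is, α_k(G) = α(K_k □ G). -/
open SimpleGraph

/-- Maximum cardinality of a vertex set inducing a `k`-colorable subgraph of `G`. -/
noncomputable def maxKColorable {V : Type*} [Fintype V] (G : SimpleGraph V) (k : ℕ) : ℕ :=
  sSup {m | ∃ S : Finset V, S.card = m ∧
    ∃ c : V → Fin k, ∀ i ∈ S, ∀ j ∈ S, G.Adj i j → c i ≠ c j}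

/-- Independence (stability) number of `G`. -/
noncomputable def indepNum' {V : Type*} [Fintype V] (G : SimpleGraph V) : ℕ :=
  sSup {m | ∃ S : Finset V, S.card = m ∧ ∀ i ∈ S, ∀ j ∈ S, ¬ G.Adj i j}

theorem stmt_2 (n k : ℕ) (hk : 1 ≤ k) (G : SimpleGraph (Fin n)) :
    maxKColorable G k = indepNum' ((⊤ : SimpleGraph (Fin k)) □ G) := by
  unfold maxKColorable indepNum'
  congr 1
  ext m
  constructor
  · rintro ⟨S, hS, c, hc⟩
    refine ⟨S.image (fun v => (c v, v)), ?_, ?_⟩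
    · rw [Finset.card_image_of_injective _ (fun a b h => (Prod.ext_iff.mp h).2), hS]
    · rintro ⟨i, u⟩ hu ⟨j, v⟩ hv hadj
      simp only [Finset.mem_image] at hu hv
      obtain ⟨u', huS, h2⟩ := hu
      obtain ⟨v', hvS, h3⟩ := hv
      injection h2 with h2a h2b
      injection h3 with h3a h3b
      subst h2a; subst h2b; subst h3a; subst h3b
      rw [boxProd_adj] at hadj
      rcases hadj with ⟨htop, heq⟩ | ⟨hG, heq⟩
      · dsimp at heq; subst heq
        exact (SimpleGraph.top_adj _ _).mp htop rfl
      · exact hc u' huS v' hvS hG heq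
  · rintro ⟨T, hT, hind⟩
    haveI : Inhabited (Fin k) := ⟨⟨0, hk⟩⟩
    classical
    set c : Fin n → Fin k := fun v =>
      if h : ∃ i, (i, v) ∈ T then h.choose else default with hcdef
    have hmem : ∀ v : Fin n, (∃ i, (i, v) ∈ T) → (c v, v) ∈ T := by
      intro v h
      simp only [hcdef, dif_pos h]
      exact h.choose_spec
    refine ⟨T.image Prod.snd, ?_, c, ?_⟩
    · rw [Finset.card_image_of_injOn, hT]
      rintro ⟨i, u⟩ hu ⟨j, v⟩ hv (h : u = v)
      subst h
      by_contra hne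
      have hij : i ≠ j := fun h => hne (by rw [h])
      exact hind _ hu _ hv (Or.inl ⟨(SimpleGraph.top_adj _ _).mpr hij, rfl⟩)
    · intro u hu v hv hG hcc
      simp only [Finset.mem_image] at hu hv
      obtain ⟨⟨i, u'⟩, hiT, rfl⟩ := hu
      obtain ⟨⟨j, v'⟩, hjT, rfl⟩ := hv
      exact hind _ (hmem _ ⟨i, hiT⟩) _ (hmem _ ⟨j, hjT⟩) (Or.inr ⟨hG, hcc⟩)
end

section
/- Let Z, X be symmetric n×n matrices and k ≥ 2 with Z − X ⪰ 0 and [[1, diag(Z)ᵀ],[diag(Z), Z + (k−1)X]] ⪰ 0. Then [[k, diag(Z)ᵀ],[diag(Z), Z]] ⪰ 0. -/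
open Matrix

private lemma quad_form_fromBlocks (n : ℕ) (A : Matrix Unit Unit ℝ) (B : Matrix Unit (Fin n) ℝ)
    (C : Matrix (Fin n) Unit ℝ) (D : Matrix (Fin n) (Fin n) ℝ) (a : ℝ) (v : Fin n → ℝ) :
    Sum.elim (fun _ => a) v ⬝ᵥ (fromBlocks A B C D *ᵥ Sum.elim (fun _ => a) v) =
      A () () * a^2 + a * (B () ⬝ᵥ v) + a * ((fun i => C i ()) ⬝ᵥ v) + v ⬝ᵥ (D *ᵥ v) := by
  simp only [dotProduct, mulVec, Fintype.sum_sum_type, Finset.univ_unique, Finset.sum_singleton,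
    Sum.elim_inl, Sum.elim_inr, fromBlocks_apply₁₁, fromBlocks_apply₁₂, fromBlocks_apply₂₁,
    fromBlocks_apply₂₂, Finset.sum_add_distrib, mul_add, Finset.mul_sum]
  ring_nf
  have h : (default : Unit) = () := rfl
  simp only [h]
  rw [Finset.sum_congr rfl
    (fun x _ => by ring : ∀ x ∈ Finset.univ, a * v x * C x () = a * C x () * v x)]
  ring

theorem stmt_7 (n k : ℕ) (hk : 2 ≤ k) (Z X : Matrix (Fin n) (Fin n) ℝ)
    (hZ : Z.IsHermitian) (hX : X.IsHermitian)
    (hZX : (Z - X).PosSemidef)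
    (hpsd : (Matrix.fromBlocks
      (Matrix.of fun (_ : Unit) (_ : Unit) => (1 : ℝ))
      (Matrix.of fun (_ : Unit) i => Z.diag i)
      (Matrix.of fun i (_ : Unit) => Z.diag i)
      (Z + ((k : ℝ) - 1) • X)).PosSemidef) :
    (Matrix.fromBlocks
      (Matrix.of fun (_ : Unit) (_ : Unit) => (k : ℝ))
      (Matrix.of fun (_ : Unit) i => Z.diag i)
      (Matrix.of fun i (_ : Unit) => Z.diag i)
      Z).PosSemidef := by
  have hk1 : (1:ℝ) ≤ (k:ℝ) := by exact_mod_cast Nat.one_le_of_lt hk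
  -- key inequality: (d⬝v)² ≤ k * (v⬝Zv)
  have key : ∀ v : Fin n → ℝ, (Z.diag ⬝ᵥ v)^2 ≤ (k:ℝ) * (v ⬝ᵥ Z *ᵥ v) := by
    intro v
    set s : ℝ := Z.diag ⬝ᵥ v with hs
    have h1 := hpsd.dotProduct_mulVec_nonneg (Sum.elim (fun _ => -s) v)
    rw [show star (Sum.elim (fun _ => -s) v) = Sum.elim (fun _ => -s) v from
      funext fun i => star_trivial _] at h1
    rw [quad_form_fromBlocks] at h1
    have h1' : (0:ℝ) ≤ 1 * (-s)^2 + (-s) * (Z.diag ⬝ᵥ v) + (-s) * (Z.diag ⬝ᵥ v)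
        + v ⬝ᵥ ((Z + ((k:ℝ) - 1) • X) *ᵥ v) := h1
    clear h1
    have h2 := hZX.dotProduct_mulVec_nonneg v
    rw [show star v = v from funext fun i => star_trivial _] at h2
    have hX1 : v ⬝ᵥ (Z + ((k:ℝ) - 1) • X) *ᵥ v
        = v ⬝ᵥ Z *ᵥ v + ((k:ℝ) - 1) * (v ⬝ᵥ X *ᵥ v) := by
      simp [add_mulVec, smul_mulVec, dotProduct_add, dotProduct_smul, smul_eq_mul]
    have hX2 : v ⬝ᵥ (Z - X) *ᵥ v = v ⬝ᵥ Z *ᵥ v - v ⬝ᵥ X *ᵥ v := by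
      simp [sub_mulVec, dotProduct_sub]
    rw [hX2] at h2
    rw [hX1] at h1'
    nlinarith [h1', h2, hk1]
  apply PosSemidef.of_dotProduct_mulVec_nonneg
  · -- Hermitian
    ext (i | i) (j | j) <;>
      simp [conjTranspose_apply, fromBlocks_apply₁₁, fromBlocks_apply₁₂, fromBlocks_apply₂₁,
        fromBlocks_apply₂₂] <;>
    exact_mod_cast congrFun (congrFun hZ i) j
  · intro x
    have hx : x = Sum.elim (fun _ => x (Sum.inl ())) (fun i => x (Sum.inr i)) := by
      funext i; cases i with
      | inl u => cases u; rfl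
      | inr i => rfl
    set a := x (Sum.inl ()) with ha
    set v : Fin n → ℝ := fun i => x (Sum.inr i) with hv
    rw [show star x = x from funext fun i => star_trivial _, hx, quad_form_fromBlocks]
    show (0:ℝ) ≤ (k:ℝ) * a^2 + a * (Z.diag ⬝ᵥ v) + a * (Z.diag ⬝ᵥ v) + v ⬝ᵥ (Z *ᵥ v)
    have := key v
    nlinarith [sq_nonneg ((k:ℝ) * a + Z.diag ⬝ᵥ v), hk1]
end

section
/- Let Z be a symmetric n×n positive semidefinite matrix and k ≥ 1 such that [[k, diag(Z)ᵀ],[diag(Z), Z]] ⪰ 0. Set X = (1/k)·diag(Z)diag(Z)ᵀ. Then Z − X ⪰ 0, Z + (k−1)X ⪰ 0, and Z + (k−1)X − diag(Z)diag(Z)ᵀ = Z − X ⪰ 0; in particular [[1, diag(Z)ᵀ],[diag(Z), Z + (k−1)X]] ⪰ 0. -/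
open Matrix

lemma key_aux (n k : ℕ) (hk : 1 ≤ k) (Z : Matrix (Fin n) (Fin n) ℝ)
    (hpsd : (Matrix.fromBlocks
      (Matrix.of fun (_ : Unit) (_ : Unit) => (k : ℝ))
      (Matrix.of fun (_ : Unit) i => Z.diag i)
      (Matrix.of fun i (_ : Unit) => Z.diag i)
      Z).PosSemidef) (x : Fin n → ℝ) :
    (Z.diag ⬝ᵥ x)^2 ≤ (k:ℝ) * (x ⬝ᵥ Z *ᵥ x) := by
  have hk0 : (0:ℝ) < k := by exact_mod_cast hk
  have := hpsd.dotProduct_mulVec_nonneg (Sum.elim (fun _ => -(Z.diag ⬝ᵥ x)/k) x)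
  simp only [dotProduct, Matrix.mulVec, Fintype.sum_sum_type, Sum.elim_inl, Sum.elim_inr,
    Matrix.fromBlocks_apply₁₁, Matrix.fromBlocks_apply₁₂, Matrix.fromBlocks_apply₂₁,
    Matrix.fromBlocks_apply₂₂, Matrix.of_apply, RCLike.star_def, starRingEnd_apply, star_trivial,
    Finset.univ_unique, Finset.sum_singleton] at this
  simp only [dotProduct, Matrix.mulVec] at *
  set s := ∑ i : Fin n, Z.diag i * x i with hs
  set q := ∑ x_1 : Fin n, x x_1 * ∑ x_2 : Fin n, Z x_1 x_2 * x x_2 with hq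
  have hsum : ∑ x_1 : Fin n, x x_1 * (Z.diag x_1 * (-s / ↑k) + ∑ x_2 : Fin n, Z x_1 x_2 * x x_2)
      = s * (-s / ↑k) + q := by
    simp only [mul_add, Finset.sum_add_distrib, hq]
    congr 1
    rw [hs, Finset.sum_mul]
    exact Finset.sum_congr rfl fun i _ => by ring
  rw [hsum] at this
  have h2 : -s/(k:ℝ)*((k:ℝ)*(-s/(k:ℝ))+s) + (s*(-s/(k:ℝ))+q) = q - s^2/(k:ℝ) := by
    field_simp
    ring
  rw [h2] at this
  have h3 := (div_le_iff₀ hk0).mp (by linarith : s^2/(k:ℝ) ≤ q)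
  linarith

theorem stmt_8 (n k : ℕ) (hk : 1 ≤ k) (Z : Matrix (Fin n) (Fin n) ℝ)
    (hZ : Z.PosSemidef)
    (hpsd : (Matrix.fromBlocks
      (Matrix.of fun (_ : Unit) (_ : Unit) => (k : ℝ))
      (Matrix.of fun (_ : Unit) i => Z.diag i)
      (Matrix.of fun i (_ : Unit) => Z.diag i)
      Z).PosSemidef)
    (X : Matrix (Fin n) (Fin n) ℝ)
    (hXdef : X = Matrix.of fun i j => (1 / (k : ℝ)) * (Z.diag i * Z.diag j)) :
    (Z - X).PosSemidef ∧ (Z + ((k : ℝ) - 1) • X).PosSemidef ∧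
    (Z + ((k : ℝ) - 1) • X - Matrix.of fun i j => Z.diag i * Z.diag j) = Z - X ∧
    (Z + ((k : ℝ) - 1) • X - Matrix.of fun i j => Z.diag i * Z.diag j).PosSemidef ∧
    (Matrix.fromBlocks
      (Matrix.of fun (_ : Unit) (_ : Unit) => (1 : ℝ))
      (Matrix.of fun (_ : Unit) i => Z.diag i)
      (Matrix.of fun i (_ : Unit) => Z.diag i)
      (Z + ((k : ℝ) - 1) • X)).PosSemidef := by
  have hk0 : (0:ℝ) < k := by exact_mod_cast hk
  have hkne : (k:ℝ) ≠ 0 := ne_of_gt hk0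
  -- quadratic form of X
  have hXq : ∀ x : Fin n → ℝ, x ⬝ᵥ X *ᵥ x = (1/(k:ℝ)) * (Z.diag ⬝ᵥ x)^2 := by
    intro x
    subst hXdef
    simp only [dotProduct, Matrix.mulVec, Matrix.of_apply, pow_two, Finset.mul_sum,
      Finset.sum_mul]
    rw [Finset.sum_comm]
    exact Finset.sum_congr rfl fun i _ => Finset.sum_congr rfl fun j _ => by ring
  have hXherm : X.IsHermitian := by
    subst hXdef
    ext i j
    simp [Matrix.conjTranspose_apply]
    left
    ring
  -- psd of Z - X
  have psd1 : (Z - X).PosSemidef := by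
    refine .of_dotProduct_mulVec_nonneg (hZ.1.sub hXherm) fun x => ?_
    have hkey := key_aux n k hk Z hpsd x
    simp only [star_trivial, Matrix.sub_mulVec, dotProduct_sub, hXq]
    have : (1/(k:ℝ)) * (Z.diag ⬝ᵥ x)^2 ≤ x ⬝ᵥ Z *ᵥ x := by
      rw [one_div, inv_mul_le_iff₀ hk0]
      exact hkey
    linarith
  have hXpsd : X.PosSemidef := by
    refine .of_dotProduct_mulVec_nonneg hXherm fun x => ?_
    simp only [star_trivial, hXq]
    positivity
  have hsmul : (((k:ℝ)-1) • X).IsHermitian := by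
    rw [Matrix.IsHermitian, Matrix.conjTranspose_smul, hXherm.eq]
    simp
  have psd2 : (Z + ((k : ℝ) - 1) • X).PosSemidef := by
    refine .of_dotProduct_mulVec_nonneg (hZ.1.add hsmul) fun x => ?_
    have h1 := psd1.dotProduct_mulVec_nonneg x
    have h2 := hXpsd.dotProduct_mulVec_nonneg x
    simp only [star_trivial, Matrix.add_mulVec, dotProduct_add, Matrix.smul_mulVec,
      dotProduct_smul, smul_eq_mul, Matrix.sub_mulVec, dotProduct_sub] at *
    have hk1 : (0:ℝ) ≤ (k:ℝ) - 1 := by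
      have : (1:ℝ) ≤ (k:ℝ) := by exact_mod_cast hk
      linarith
    nlinarith [mul_nonneg hk1 h2]
  have eq3 : (Z + ((k : ℝ) - 1) • X - Matrix.of fun i j => Z.diag i * Z.diag j) = Z - X := by
    subst hXdef
    ext i j
    simp only [Matrix.sub_apply, Matrix.add_apply, Matrix.smul_apply, Matrix.of_apply,
      smul_eq_mul]
    field_simp
    ring
  refine ⟨psd1, psd2, eq3, eq3 ▸ psd1, ?_⟩
  -- the block matrix
  set B : Matrix Unit (Fin n) ℝ := Matrix.of fun _ i => Z.diag i with hB
  have hBH : (Matrix.of fun i (_ : Unit) => Z.diag i) = Bᴴ := by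
    ext i j
    simp [Matrix.conjTranspose_apply, hB]
  have hA1 : (Matrix.of fun (_ : Unit) (_ : Unit) => (1:ℝ)) = (1 : Matrix Unit Unit ℝ) := by
    ext i j
    simp [Matrix.one_apply]
  rw [hA1, hBH]
  haveI : Invertible (1 : Matrix Unit Unit ℝ) := invertibleOne
  rw [Matrix.PosDef.fromBlocks₁₁ _ _ Matrix.PosDef.one]
  have hBB : Bᴴ * (1 : Matrix Unit Unit ℝ)⁻¹ * B
      = Matrix.of fun i j => Z.diag i * Z.diag j := by
    rw [inv_one, Matrix.mul_one]
    ext i j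
    simp [Matrix.mul_apply, Matrix.conjTranspose_apply, hB]
  rw [hBB, eq3]
  exact psd1
end

section
/- Let A be a real symmetric n×n matrix and X an n×k real matrix with XᵀX = I_k. Then trace(AXXᵀ) ≤ λ₁(A) + λ₂(A) + ⋯ + λ_k(A), where λ₁ ≥ ⋯ ≥ λ_n are the eigenvalues of A in nonincreasing order. -/
open Matrix Finset

lemma key_comb (n k : ℕ) (hk : k ≤ n) (μ t : Fin n → ℝ) (hμanti : Antitone μ)
    (ht0 : ∀ i, 0 ≤ t i) (ht1 : ∀ i, t i ≤ 1) (hsum : ∑ i, t i = k) :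
    ∑ i, μ i * t i ≤ ∑ i : Fin k, μ (Fin.castLE hk i) := by
  rcases Nat.eq_zero_or_pos k with hk0 | hkpos
  · subst hk0
    have hz : ∑ i, t i = 0 := by simpa using hsum
    have h0 : ∀ i ∈ Finset.univ, t i = 0 :=
      (Finset.sum_eq_zero_iff_of_nonneg (fun i _ => ht0 i)).mp hz
    have hL : ∑ i, μ i * t i = 0 :=
      Finset.sum_eq_zero fun i hi => by rw [h0 i hi, mul_zero]
    simp [hL]
  · set S : Finset (Fin n) := Finset.univ.map (Fin.castLEEmb hk) with hS
    have hmem : ∀ i : Fin n, i ∈ S ↔ (i : ℕ) < k := by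
      intro i
      constructor
      · rintro hi
        simp only [hS, Finset.mem_map, Fin.castLEEmb, Finset.mem_univ, true_and] at hi
        obtain ⟨j, hj⟩ := hi
        have : (i : ℕ) = (j : ℕ) := by rw [← hj]; rfl
        rw [this]; exact j.isLt
      · intro hi
        simp only [hS, Finset.mem_map, Finset.mem_univ, true_and]
        exact ⟨⟨i, hi⟩, by ext; rfl⟩
    have hcard : S.card = k := by simp [hS]
    have hrhs : ∑ i : Fin k, μ (Fin.castLE hk i) = ∑ i ∈ S, μ i := by
      rw [hS, Finset.sum_map]; rfl
    set km : Fin n := ⟨k - 1, lt_of_lt_of_le (Nat.sub_lt hkpos one_pos) hk⟩ with hkm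
    set c : ℝ := μ km with hc
    have h1 : ∑ i ∈ S, μ i * t i ≤ ∑ i ∈ S, (μ i + (c * t i - c)) := by
      apply Finset.sum_le_sum
      intro i hi
      have hik : (i : ℕ) < k := (hmem i).mp hi
      have hle : i ≤ km := by
        rw [Fin.le_def]; exact Nat.le_sub_one_of_lt hik
      have hci : c ≤ μ i := hμanti hle
      nlinarith [ht1 i, ht0 i]
    have h2 : ∑ i ∈ Sᶜ, μ i * t i ≤ ∑ i ∈ Sᶜ, c * t i := by
      apply Finset.sum_le_sum
      intro i hi
      have hik : ¬ (i : ℕ) < k := by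
        intro h; exact (Finset.mem_compl.mp hi) ((hmem i).mpr h)
      have hle : km ≤ i := by
        rw [Fin.le_def]
        exact le_trans (Nat.sub_le k 1) (le_of_not_gt hik)
      exact mul_le_mul_of_nonneg_right (hμanti hle) (ht0 i)
    have hsplit : ∑ i ∈ S, t i + ∑ i ∈ Sᶜ, t i = (k : ℝ) := by
      rw [Finset.sum_add_sum_compl]; exact hsum
    calc ∑ i, μ i * t i
        = ∑ i ∈ S, μ i * t i + ∑ i ∈ Sᶜ, μ i * t i := (Finset.sum_add_sum_compl S _).symm
      _ ≤ (∑ i ∈ S, (μ i + (c * t i - c))) + ∑ i ∈ Sᶜ, c * t i := add_le_add h1 h2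
      _ = ∑ i ∈ S, μ i + c * (∑ i ∈ S, t i + ∑ i ∈ Sᶜ, t i) - c * S.card := by
          rw [Finset.sum_add_distrib, Finset.sum_sub_distrib, ← Finset.mul_sum,
            ← Finset.mul_sum, Finset.sum_const, nsmul_eq_mul, mul_comm (S.card : ℝ) c]
          ring
      _ = ∑ i ∈ S, μ i := by rw [hsplit, hcard]; ring
      _ = ∑ i : Fin k, μ (Fin.castLE hk i) := hrhs.symm

theorem stmt_19 (n k : ℕ) (hk : k ≤ n)
    (A : Matrix (Fin n) (Fin n) ℝ) (hA : A.IsHermitian)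
    (X : Matrix (Fin n) (Fin k) ℝ) (hX : Xᵀ * X = 1)
    (μ : Fin n → ℝ) (hμanti : Antitone μ)
    (σ : Fin n ≃ Fin n) (hμ : μ = hA.eigenvalues ∘ σ) :
    (A * X * Xᵀ).trace ≤ ∑ i : Fin k, μ (Fin.castLE hk i) := by
  set U : Matrix (Fin n) (Fin n) ℝ := (hA.eigenvectorUnitary : Matrix (Fin n) (Fin n) ℝ) with hU
  have hUU : star U * U = 1 := by
    exact (Matrix.mem_unitaryGroup_iff').mp hA.eigenvectorUnitary.2
  have hUstar : star U = Uᵀ := conjTranspose_eq_transpose_of_trivial U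
  set Y : Matrix (Fin n) (Fin k) ℝ := Uᵀ * X with hY
  have hUUt : U * Uᵀ = 1 := by
    rw [← hUstar]
    exact (Matrix.mem_unitaryGroup_iff).mp hA.eigenvectorUnitary.2
  have hYY : Yᵀ * Y = 1 := by
    rw [hY, transpose_mul, transpose_transpose, Matrix.mul_assoc,
      ← Matrix.mul_assoc U Uᵀ X, hUUt, Matrix.one_mul, hX]
  set P : Matrix (Fin n) (Fin n) ℝ := Y * Yᵀ with hP
  have hPsymm : Pᵀ = P := by rw [hP, transpose_mul, transpose_transpose]
  have hPidem : P * P = P := by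
    rw [hP, Matrix.mul_assoc, ← Matrix.mul_assoc Yᵀ Y Yᵀ, hYY, Matrix.one_mul]
  have hP0 : ∀ j, 0 ≤ P j j := by
    intro j
    rw [hP]
    simp only [mul_apply, transpose_apply]
    exact Finset.sum_nonneg fun i _ => mul_self_nonneg _
  have hsym2 : ∀ a b, P a b = P b a := by
    intro a b
    conv_rhs => rw [← hPsymm]
    rw [transpose_apply]
  have hP1 : ∀ j, P j j ≤ 1 := by
    intro j
    have hsq : (P * P) j j = ∑ m, P j m * P j m := by
      rw [mul_apply]
      exact Finset.sum_congr rfl fun m _ => by rw [hsym2 m j]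
    have hge : (P j j) * (P j j) ≤ P j j := by
      calc P j j * P j j ≤ ∑ m, P j m * P j m :=
            Finset.single_le_sum (fun m _ => mul_self_nonneg (P j m)) (Finset.mem_univ j)
        _ = (P * P) j j := hsq.symm
        _ = P j j := by rw [hPidem]
    nlinarith [hP0 j]
  have hPtr : ∑ j, P j j = (k : ℝ) := by
    have : P.trace = (Yᵀ * Y).trace := by rw [hP, trace_mul_comm]
    rw [hYY, trace_one] at this
    simpa [Matrix.trace] using this
  -- rewrite trace
  have hdiag : (star U) * A * U = diagonal (hA.eigenvalues) := by
    have h := hA.conjStarAlgAut_star_eigenvectorUnitary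
    simpa using h
  have htrace : (A * X * Xᵀ).trace = ∑ j, hA.eigenvalues j * P j j := by
    have hA' : A = U * diagonal hA.eigenvalues * Uᵀ := by
      rw [← hUstar, ← hdiag]
      rw [hUstar]
      have hUUt : U * Uᵀ = 1 := by
        rw [← hUstar]
        exact (Matrix.mem_unitaryGroup_iff).mp hA.eigenvectorUnitary.2
      have hUtU : Uᵀ * U = 1 := by rw [← hUstar]; exact hUU
      calc A = (U * Uᵀ) * A * (U * Uᵀ) := by rw [hUUt]; simp
        _ = U * (Uᵀ * A * U) * Uᵀ := by noncomm_ring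
    calc (A * X * Xᵀ).trace
        = (U * (diagonal hA.eigenvalues * (Uᵀ * (X * Xᵀ)))).trace := by
          conv_lhs => rw [hA']
          simp only [Matrix.mul_assoc]
      _ = (diagonal hA.eigenvalues * (Uᵀ * (X * (Xᵀ * U)))).trace := by
          rw [Matrix.trace_mul_comm]; simp only [Matrix.mul_assoc]
      _ = (diagonal hA.eigenvalues * P).trace := by
          rw [hP, hY, transpose_mul, transpose_transpose]
          simp only [Matrix.mul_assoc]
      _ = ∑ j, hA.eigenvalues j * P j j := by
          rw [Matrix.trace]
          apply Finset.sum_congr rfl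
          intro j _
          simp [Matrix.diag, mul_apply, diagonal_apply]
  rw [htrace]
  have hre : ∑ j, hA.eigenvalues j * P j j = ∑ i, μ i * P (σ i) (σ i) := by
    rw [← Equiv.sum_comp σ (fun j => hA.eigenvalues j * P j j)]
    apply Finset.sum_congr rfl
    intro i _
    rw [hμ]; rfl
  rw [hre]
  exact key_comb n k hk μ (fun i => P (σ i) (σ i)) hμanti (fun i => hP0 _) (fun i => hP1 _)
    (by simpa using (Equiv.sum_comp σ (fun j => P j j)).trans hPtr)
end
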